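/- arXiv:1102.4377 — 3 statements merged into one kernel-verified Lean document; each statement's English description precedes it below -/
import Mathlib

section
/- Let n, m be positive integers, and fix real numbers y > 0 and z. The polynomial function p(r) = ((r+z)/n)^m · ((r-z)/m)^n - y² has exactly one zero in the open interval (|z|, ∞). -/
theorem stmt_4 (n m : ℕ) (hn : 0 < n) (hm : 0 < m) (y z : ℝ) (hy : 0 < y)
    (p : ℝ → ℝ) (hp : ∀ r, p r = ((r + z) / n) ^ m * ((r - z) / m) ^ n - y ^ 2) :
    ∃! r : ℝ, r ∈ Set.Ioi |z| ∧ p r = 0 := by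
  set f : ℝ → ℝ := fun r => ((r + z) / n) ^ m * ((r - z) / m) ^ n with hf
  have hn' : (0:ℝ) < n := by exact_mod_cast hn
  have hm' : (0:ℝ) < m := by exact_mod_cast hm
  have hmono : StrictMonoOn f (Set.Ici |z|) := by
    intro a ha b hb hab
    simp only [Set.mem_Ici] at ha hb
    have haz : 0 ≤ a + z := by have := neg_abs_le z; linarith
    have haz' : 0 ≤ a - z := by have := le_abs_self z; linarith
    have h1 : (a + z) / n < (b + z) / n :=
      div_lt_div_of_pos_right (by linarith) hn'
    have h2 : (a - z) / m < (b - z) / m :=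
      div_lt_div_of_pos_right (by linarith) hm'
    have h1n : 0 ≤ (a + z) / n := div_nonneg haz hn'.le
    have h2n : 0 ≤ (a - z) / m := div_nonneg haz' hm'.le
    exact mul_lt_mul'' (pow_lt_pow_left₀ h1 h1n hm.ne')
      (pow_lt_pow_left₀ h2 h2n hn.ne') (pow_nonneg h1n _) (pow_nonneg h2n _)
  have hcont : Continuous f := by fun_prop
  have hf0 : f |z| = 0 := by
    rcases abs_cases z with ⟨h1, h2⟩ | ⟨h1, h2⟩ <;>
      simp [hf, h1, zero_pow hn.ne', zero_pow hm.ne']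
  set b : ℝ := |z| + (n + m) * (y ^ 2 + 1) with hb
  have hy2 : 0 < y ^ 2 := by positivity
  have hbz : |z| < b := by
    have : (0:ℝ) < (n + m) * (y ^ 2 + 1) := by positivity
    linarith
  have hfb : y ^ 2 ≤ f b := by
    have h1 : y ^ 2 ≤ (b + z) / n := by
      rw [le_div_iff₀ hn']
      have := neg_abs_le z
      have hnm : (n:ℝ) ≤ n + m := by linarith
      nlinarith
    have h2 : (1:ℝ) ≤ (b - z) / m := by
      rw [le_div_iff₀ hm']
      have := le_abs_self z
      nlinarith
    have h1' : (1:ℝ) ≤ (b + z) / n := by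
      rw [le_div_iff₀ hn']
      have h3 := neg_abs_le z
      have h4 : (n:ℝ) ≤ (n + m) * (y ^ 2 + 1) := by nlinarith
      linarith
    calc y ^ 2 ≤ ((b + z) / n) ^ m := by
          calc y ^ 2 ≤ (b + z) / n := h1
          _ = ((b + z) / n) ^ 1 := (pow_one _).symm
          _ ≤ ((b + z) / n) ^ m := pow_le_pow_right₀ h1' hm
      _ = ((b + z) / n) ^ m * 1 := (mul_one _).symm
      _ ≤ f b := by
          apply mul_le_mul_of_nonneg_left (one_le_pow₀ h2) (by positivity)
  have : y ^ 2 ∈ Set.Icc (f |z|) (f b) := ⟨by rw [hf0]; exact hy2.le, hfb⟩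
  obtain ⟨c, hc, hfc⟩ := intermediate_value_Icc hbz.le hcont.continuousOn this
  have hcz : |z| < c := by
    rcases lt_or_eq_of_le hc.1 with h | h
    · exact h
    · exfalso; rw [← h, hf0] at hfc; linarith
  refine ⟨c, ⟨hcz, by rw [hp]; exact sub_eq_zero.mpr hfc⟩, ?_⟩
  rintro r ⟨hr, hpr⟩
  rw [hp] at hpr
  have hfr : f r = y ^ 2 := by
    show ((r + z) / n) ^ m * ((r - z) / m) ^ n = y ^ 2
    linarith
  exact hmono.injOn (Set.mem_Ici.2 (le_of_lt hr)) (Set.mem_Ici.2 hcz.le)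
    (by rw [hfr, hfc])
end

section
/- Let n, m be positive integers and fix real numbers y > 0 and z with n^m · m^n · y² < z^(n+m) (which forces z > 0 if n+m is even, and in general z^(n+m) > 0). Then the polynomial p(r) = ((z+r)/n)^m · ((z-r)/m)^n - y² has exactly one zero in the open interval (0, |z|). -/
/-!
Clearing denominators, `p r = 0` says `g r = t` with `g r = (z + r) ^ m * (z - r) ^ n` and
`t = n ^ m * m ^ n * y ^ 2`. If `z < 0` then `n + m` is even and `g` for `(m, n, z)` equals `g` for
`(n, m, -z)`, so we may take `z > 0`. On `[-z, z]` the derivative of `g` has the sign of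
`(m - n) z - (m + n) r`, so `g` increases up to `c = (m - n) z / (m + n)` and decreases after it.
Since `g 0 = z ^ (n + m) > t` and `g z = 0 < t`, no solution lies in `(0, c]` (there `g > g 0`), and
the intermediate value theorem together with strict antitonicity on `[c, z]` gives exactly one.
-/

open Set

theorem existsUnique_mem_Ioo_eq_of_strictMonoOn_of_strictAntiOn {f : ℝ → ℝ} {a b c t : ℝ}
    (hab : a ≤ b) (hf : ContinuousOn f (Icc a b)) (hmono : StrictMonoOn f (Icc a c))
    (hanti : StrictAntiOn f (Icc c b)) (ha : t < f a) (hb : f b < t) :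
    ∃! x, x ∈ Ioo a b ∧ f x = t := by
  have hc : ∀ x ∈ Ioo a b, f x = t → x ∈ Icc c b := by
    intro x hx hfx
    refine ⟨le_of_not_ge fun hxc => ?_, hx.2.le⟩
    have := hmono ⟨le_rfl, hx.1.le.trans hxc⟩ ⟨hx.1.le, hxc⟩ hx.1
    linarith
  obtain ⟨x, hx, hfx⟩ := intermediate_value_Ioo' hab hf ⟨hb, ha⟩
  exact ⟨x, ⟨hx, hfx⟩, fun x' ⟨hx', hfx'⟩ =>
    hanti.injOn (hc x' hx' hfx') (hc x hx hfx) (hfx'.trans hfx.symm)⟩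

theorem hasDerivAt_add_pow_mul_sub_pow {m n : ℕ} (hm : m ≠ 0) (hn : n ≠ 0) (z r : ℝ) :
    HasDerivAt (fun r => (z + r) ^ m * (z - r) ^ n)
      ((z + r) ^ (m - 1) * (z - r) ^ (n - 1) * (m * (z - r) - n * (z + r))) r := by
  have h := (((hasDerivAt_id' r).const_add z).fun_pow m).fun_mul
    (((hasDerivAt_id' r).const_sub z).fun_pow n)
  refine h.congr_deriv ?_
  rw [← pow_sub_one_mul hm (z + r), ← pow_sub_one_mul hn (z - r)]
  ring

theorem add_pow_mul_sub_pow_neg_of_even {m n : ℕ} (h : Even (m + n)) (z r : ℝ) :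
    (z + r) ^ m * (z - r) ^ n = (-z + r) ^ n * (-z - r) ^ m := by
  have hz : z + r = -(-z - r) := by ring
  have hz' : z - r = -(-z + r) := by ring
  rw [hz, hz', neg_pow, neg_pow (-z + r), mul_mul_mul_comm, ← pow_add, h.neg_one_pow]
  ring

theorem strictMonoOn_add_pow_mul_sub_pow {m n : ℕ} (hm : m ≠ 0) (hn : n ≠ 0) (z : ℝ) :
    StrictMonoOn (fun r => (z + r) ^ m * (z - r) ^ n) (Icc (-z) ((m - n) * z / (m + n))) := by
  have hmn : (0 : ℝ) < m + n := by positivity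
  refine strictMonoOn_of_deriv_pos (convex_Icc _ _) (by fun_prop) fun x hx => ?_
  rw [interior_Icc] at hx
  obtain ⟨hzx, hxc⟩ := hx
  rw [lt_div_iff₀ hmn] at hxc
  have hxz : x < z := by nlinarith
  rw [(hasDerivAt_add_pow_mul_sub_pow hm hn z x).deriv]
  have : 0 < z + x := by linarith
  have : 0 < z - x := by linarith
  have : 0 < m * (z - x) - n * (z + x) := by linarith
  positivity

theorem strictAntiOn_add_pow_mul_sub_pow {m n : ℕ} (hm : m ≠ 0) (hn : n ≠ 0) (z : ℝ) :
    StrictAntiOn (fun r => (z + r) ^ m * (z - r) ^ n) (Icc ((m - n) * z / (m + n)) z) := by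
  have hmn : (0 : ℝ) < m + n := by positivity
  refine strictAntiOn_of_deriv_neg (convex_Icc _ _) (by fun_prop) fun x hx => ?_
  rw [interior_Icc] at hx
  obtain ⟨hcx, hxz⟩ := hx
  rw [div_lt_iff₀ hmn] at hcx
  have hzx : -z < x := by nlinarith
  rw [(hasDerivAt_add_pow_mul_sub_pow hm hn z x).deriv]
  have : 0 < z + x := by linarith
  have : 0 < z - x := by linarith
  have : m * (z - x) - n * (z + x) < 0 := by linarith
  exact mul_neg_of_pos_of_neg (by positivity) this

theorem existsUnique_mem_Ioo_add_pow_mul_sub_pow_eq {m n : ℕ} (hm : m ≠ 0) (hn : n ≠ 0) {z t : ℝ}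
    (hz : 0 < z) (ht : 0 < t) (htz : t < z ^ (m + n)) :
    ∃! r, r ∈ Ioo 0 z ∧ (z + r) ^ m * (z - r) ^ n = t := by
  refine existsUnique_mem_Ioo_eq_of_strictMonoOn_of_strictAntiOn hz.le (by fun_prop)
    ((strictMonoOn_add_pow_mul_sub_pow hm hn z).mono (Icc_subset_Icc_left (by linarith)))
    (strictAntiOn_add_pow_mul_sub_pow hm hn z) ?_ ?_
  · simpa [← pow_add] using htz
  · simpa [zero_pow hn] using ht

theorem stmt_5 (n m : ℕ) (hn : 0 < n) (hm : 0 < m) (y z : ℝ) (hy : 0 < y)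
    (hD : (n : ℝ) ^ m * (m : ℝ) ^ n * y ^ 2 < z ^ (n + m))
    (p : ℝ → ℝ) (hp : ∀ r, p r = ((z + r) / n) ^ m * ((z - r) / m) ^ n - y ^ 2) :
    ∃! r : ℝ, r ∈ Set.Ioo 0 |z| ∧ p r = 0 := by
  have hp_eq_zero : ∀ r, p r = 0 ↔ (z + r) ^ m * (z - r) ^ n = n ^ m * m ^ n * y ^ 2 := by
    intro r
    rw [hp, sub_eq_zero, div_pow, div_pow, div_mul_div_comm, div_eq_iff (by positivity)]
    ring_nf
  simp only [hp_eq_zero]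
  have ht : (0 : ℝ) < n ^ m * m ^ n * y ^ 2 := by positivity
  have hz0 : z ≠ 0 := by
    rintro rfl
    rw [zero_pow (by omega)] at hD
    linarith
  rcases hz0.lt_or_gt with hz | hz
  · have heven : Even (n + m) := by
      by_contra hodd
      linarith [(Nat.not_even_iff_odd.mp hodd).pow_neg hz]
    simp only [abs_of_neg hz, add_pow_mul_sub_pow_neg_of_even (add_comm n m ▸ heven)]
    exact existsUnique_mem_Ioo_add_pow_mul_sub_pow_eq hn.ne' hm.ne' (neg_pos.2 hz) ht
      (by rwa [heven.neg_pow])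
  · rw [abs_of_pos hz]
    exact existsUnique_mem_Ioo_add_pow_mul_sub_pow_eq hm.ne' hn.ne' hz ht (by rwa [add_comm])
end

section
/- Let v : ℝ³ → ℝ³ be a smooth vector field satisfying v · (curl v) = 0 at every point. Define the bracket {F,G}_v = v · (∇F × ∇G) for smooth functions F, G on ℝ³. Then {·,·}_v satisfies the Jacobi identity: {F,{G,H}_v}_v + {G,{H,F}_v}_v + {H,{F,G}_v}_v = 0 for all smooth F, G, H. -/
/-- Gradient of a function on `ℝ³ = Fin 3 → ℝ`. -/
noncomputable def grad9 (F : (Fin 3 → ℝ) → ℝ) (p : Fin 3 → ℝ) : Fin 3 → ℝ :=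
  fun i => fderiv ℝ F p (Pi.single i 1)

/-- The bracket `{F,G}_v = v · (∇F × ∇G)`. -/
noncomputable def bracket9 (v : (Fin 3 → ℝ) → (Fin 3 → ℝ))
    (F G : (Fin 3 → ℝ) → ℝ) (p : Fin 3 → ℝ) : ℝ :=
  ∑ i, v p i * (crossProduct (grad9 F p) (grad9 G p)) i

/-- Symmetry of second partial derivatives, in `grad9` form. -/
lemma symm9 (G : (Fin 3 → ℝ) → ℝ) (hG : ContDiff ℝ (⊤ : ℕ∞) G) (p : Fin 3 → ℝ) (i j : Fin 3) :
    grad9 (fun q => grad9 G q j) p i = grad9 (fun q => grad9 G q i) p j := by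
  have hd : ∀ y, HasFDerivAt G (fderiv ℝ G y) y :=
    fun y => ((hG.differentiable (by simp)) y).hasFDerivAt
  have hc : DifferentiableAt ℝ (fderiv ℝ G) p :=
    ((hG.fderiv_right (m := 1) (WithTop.coe_le_coe.mpr le_top)).differentiable one_ne_zero) p
  have h2 : HasFDerivAt (fderiv ℝ G) (fderiv ℝ (fderiv ℝ G) p) p := hc.hasFDerivAt
  have e1 : ∀ a b : Fin 3, grad9 (fun q => grad9 G q b) p a
      = fderiv ℝ (fderiv ℝ G) p (Pi.single a 1) (Pi.single b 1) := by
    intro a b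
    have h := fderiv_clm_apply (c := fderiv ℝ G) (u := fun _ => Pi.single b (1:ℝ))
      (x := p) hc (differentiableAt_const _)
    simp only [grad9]
    rw [h]
    simp
  rw [e1, e1, second_derivative_symmetric hd h2 (Pi.single i 1) (Pi.single j 1)]

/-- Explicit formula for the gradient of a bracket. -/
lemma key9 (v : (Fin 3 → ℝ) → (Fin 3 → ℝ)) (hv : ContDiff ℝ (⊤ : ℕ∞) v)
    (G H : (Fin 3 → ℝ) → ℝ) (hG : ContDiff ℝ (⊤ : ℕ∞) G) (hH : ContDiff ℝ (⊤ : ℕ∞) H)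
    (p : Fin 3 → ℝ) (i : Fin 3) :
    grad9 (bracket9 v G H) p i =
      grad9 (fun q => v q 0) p i * (grad9 G p 1 * grad9 H p 2 - grad9 G p 2 * grad9 H p 1)
    + v p 0 * (grad9 (fun q => grad9 G q 1) p i * grad9 H p 2
             + grad9 G p 1 * grad9 (fun q => grad9 H q 2) p i
             - grad9 (fun q => grad9 G q 2) p i * grad9 H p 1
             - grad9 G p 2 * grad9 (fun q => grad9 H q 1) p i)
    + grad9 (fun q => v q 1) p i * (grad9 G p 2 * grad9 H p 0 - grad9 G p 0 * grad9 H p 2)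
    + v p 1 * (grad9 (fun q => grad9 G q 2) p i * grad9 H p 0
             + grad9 G p 2 * grad9 (fun q => grad9 H q 0) p i
             - grad9 (fun q => grad9 G q 0) p i * grad9 H p 2
             - grad9 G p 0 * grad9 (fun q => grad9 H q 2) p i)
    + grad9 (fun q => v q 2) p i * (grad9 G p 0 * grad9 H p 1 - grad9 G p 1 * grad9 H p 0)
    + v p 2 * (grad9 (fun q => grad9 G q 0) p i * grad9 H p 1
             + grad9 G p 0 * grad9 (fun q => grad9 H q 1) p i
             - grad9 (fun q => grad9 G q 1) p i * grad9 H p 0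
             - grad9 G p 1 * grad9 (fun q => grad9 H q 0) p i) := by
  have hvj : ∀ j : Fin 3, HasFDerivAt (fun q => v q j) (fderiv ℝ (fun q => v q j) p) p :=
    fun j => (((contDiff_pi.1 hv j).differentiable (by simp)) p).hasFDerivAt
  have sg : ∀ (X : (Fin 3 → ℝ) → ℝ), ContDiff ℝ (⊤ : ℕ∞) X → ∀ j : Fin 3,
      HasFDerivAt (fun q => grad9 X q j) (fderiv ℝ (fun q => grad9 X q j) p) p := by
    intro X hX j
    have : ContDiff ℝ (⊤ : ℕ∞) (fun q => grad9 X q j) := by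
      simp only [grad9]
      exact (hX.fderiv_right (by simp)).clm_apply contDiff_const
    exact ((this.differentiable (by simp)) p).hasFDerivAt
  have hg := sg G hG
  have hh := sg H hH
  have hfun : bracket9 v G H = fun q =>
      v q 0 * (grad9 G q 1 * grad9 H q 2 - grad9 G q 2 * grad9 H q 1)
    + v q 1 * (grad9 G q 2 * grad9 H q 0 - grad9 G q 0 * grad9 H q 2)
    + v q 2 * (grad9 G q 0 * grad9 H q 1 - grad9 G q 1 * grad9 H q 0) := by
    funext q
    simp [bracket9, cross_apply, Fin.sum_univ_three]
  have hB := (((hvj 0).mul (((hg 1).mul (hh 2)).sub ((hg 2).mul (hh 1)))).add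
      ((hvj 1).mul (((hg 2).mul (hh 0)).sub ((hg 0).mul (hh 2))))).add
      ((hvj 2).mul (((hg 0).mul (hh 1)).sub ((hg 1).mul (hh 0))))
  have hgr : grad9 (bracket9 v G H) p i
      = fderiv ℝ (bracket9 v G H) p (Pi.single i 1) := rfl
  rw [hgr, hfun]
  erw [hB.fderiv]
  simp only [ContinuousLinearMap.add_apply, ContinuousLinearMap.smul_apply,
    ContinuousLinearMap.sub_apply, smul_eq_mul, grad9, Pi.mul_apply, Pi.sub_apply]
  ring

theorem stmt_9 (v : (Fin 3 → ℝ) → (Fin 3 → ℝ)) (hv : ContDiff ℝ (⊤ : ℕ∞) v)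
    (hcurl : ∀ p : Fin 3 → ℝ,
      v p 0 * (grad9 (fun q => v q 2) p 1 - grad9 (fun q => v q 1) p 2) +
      v p 1 * (grad9 (fun q => v q 0) p 2 - grad9 (fun q => v q 2) p 0) +
      v p 2 * (grad9 (fun q => v q 1) p 0 - grad9 (fun q => v q 0) p 1) = 0)
    (F G H : (Fin 3 → ℝ) → ℝ)
    (hF : ContDiff ℝ (⊤ : ℕ∞) F) (hG : ContDiff ℝ (⊤ : ℕ∞) G) (hH : ContDiff ℝ (⊤ : ℕ∞) H) :
    ∀ p : Fin 3 → ℝ,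
      bracket9 v F (bracket9 v G H) p + bracket9 v G (bracket9 v H F) p +
        bracket9 v H (bracket9 v F G) p = 0 := by
  intro p
  simp only [bracket9, cross_apply, Fin.sum_univ_three, Matrix.cons_val_zero,
    Matrix.cons_val_one, Matrix.head_cons, Matrix.cons_val_two, Matrix.tail_cons]
  rw [show ((2:Fin 3)) = 2 from rfl]
  simp only [key9 v hv G H hG hH p, key9 v hv H F hH hF p, key9 v hv F G hF hG p,
    symm9 F hF p 1 0, symm9 F hF p 2 0, symm9 F hF p 2 1,
    symm9 G hG p 1 0, symm9 G hG p 2 0, symm9 G hG p 2 1,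
    symm9 H hH p 1 0, symm9 H hH p 2 0, symm9 H hH p 2 1]
  linear_combination (-(grad9 F p 0 * (grad9 G p 1 * grad9 H p 2 - grad9 G p 2 * grad9 H p 1)
    + grad9 F p 1 * (grad9 G p 2 * grad9 H p 0 - grad9 G p 0 * grad9 H p 2)
    + grad9 F p 2 * (grad9 G p 0 * grad9 H p 1 - grad9 G p 1 * grad9 H p 0))) * hcurl p
end
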